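/- Let A_0 ⊆ A_1 ⊆ … ⊆ A_{n-1} be a chain of subrings of a commutative ring B, and let T_n = A_0 + A_1X + … + A_{n-1}X^{n-1} + X^nB[X]. For f = a_0 + a_1X + … + a_mX^m ∈ T_n (with m ≥ n): (i) f is a unit of T_n if and only if a_0 is a unit of A_0 and a_1, …, a_m are nilpotent in B; (ii) f is nilpotent in T_n if and only if a_0, a_1, …, a_m are all nilpotent in B. -/

import Mathlib

/-- The polynomial composite `T_n = A_0 + A_1·X + … + A_{n-1}·X^{n-1} + X^n·B[X]` attached to a
monotone chain `A : ℕ → Subring B`: the subring of `B[X]` of polynomials whose `i`-th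
coefficient lies in `A i` for every `i < n`. -/
def compositeChain {B : Type*} [CommRing B] (n : ℕ) (A : ℕ → Subring B) (hA : Monotone A) :
    Subring (Polynomial B) where
  carrier := {f : Polynomial B | ∀ i < n, f.coeff i ∈ A i}
  mul_mem' {f g} hf hg := by
    intro i hi
    rw [Polynomial.coeff_mul]
    refine sum_mem fun x hx => ?_
    rw [Finset.HasAntidiagonal.mem_antidiagonal] at hx
    have h1 : x.1 ≤ i := by omega
    have h2 : x.2 ≤ i := by omega
    exact mul_mem (hA h1 (hf x.1 (lt_of_le_of_lt h1 hi)))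
      (hA h2 (hg x.2 (lt_of_le_of_lt h2 hi)))
  one_mem' := by
    intro i hi
    rw [Polynomial.coeff_one]
    split
    · exact one_mem _
    · exact zero_mem _
  add_mem' {f g} hf hg := by
    intro i hi
    rw [Polynomial.coeff_add]
    exact add_mem (hf i hi) (hg i hi)
  zero_mem' := by
    intro i hi
    rw [Polynomial.coeff_zero]
    exact zero_mem _
  neg_mem' {f} hf := by
    intro i hi
    rw [Polynomial.coeff_neg]
    exact neg_mem (hf i hi)

theorem mem_compositeChain {B : Type*} [CommRing B] (n : ℕ) (A : ℕ → Subring B)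
    (hA : Monotone A) (f : Polynomial B) :
    f ∈ compositeChain n A hA ↔ ∀ i < n, f.coeff i ∈ A i := Iff.rfl

/-!
A unit of `T_n` is a unit of `B[X]`, so its non-constant coefficients are nilpotent, and the
constant coefficient map `T_n → A_0` is a ring homomorphism, so its constant term is a unit of
`A_0`. Conversely, if `a_0` is a unit of `A_0` then `C a_0` is a unit of `T_n`, and `f - C a_0`
is nilpotent in `B[X]`, hence in the subring `T_n`; a unit plus a nilpotent is a unit.
-/

open scoped Polynomial

namespace compositeChain

variable {B : Type*} [CommRing B] {n : ℕ} {A : ℕ → Subring B} {hA : Monotone A}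

noncomputable def C : A 0 →+* compositeChain n A hA :=
  (Polynomial.C.comp (A 0).subtype).codRestrict _ fun b i _ => by
    rcases eq_or_ne i 0 with rfl | hi
    · simp
    · simp [Polynomial.coeff_C, hi]

noncomputable def constantCoeff (hn : 0 < n) : compositeChain n A hA →+* A 0 :=
  (Polynomial.constantCoeff.comp (compositeChain n A hA).subtype).codRestrict _
    fun f => f.2 0 hn

@[simp]
theorem coe_C (b : A 0) : ((C b : compositeChain n A hA) : B[X]) = Polynomial.C (b : B) := rfl

@[simp]
theorem coe_constantCoeff (hn : 0 < n) (f : compositeChain n A hA) :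
    (constantCoeff hn f : B) = (f : B[X]).coeff 0 := rfl

theorem isNilpotent_iff (f : compositeChain n A hA) :
    IsNilpotent f ↔ ∀ i, IsNilpotent ((f : B[X]).coeff i) := by
  rw [← IsNilpotent.map_iff (compositeChain n A hA).subtype_injective,
    Polynomial.isNilpotent_iff]
  rfl

theorem isUnit_iff (hn : 0 < n) (f : compositeChain n A hA) :
    IsUnit f ↔ IsUnit (constantCoeff hn f) ∧ ∀ i, i ≠ 0 → IsNilpotent ((f : B[X]).coeff i) := by
  refine ⟨fun hf => ⟨hf.map _, ?_⟩, fun ⟨h0, hnil⟩ => ?_⟩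
  · exact (Polynomial.isUnit_iff_coeff_isUnit_isNilpotent.mp (hf.map (compositeChain n A hA).subtype)).2
  · have hsub : IsNilpotent (f - C (constantCoeff hn f)) := by
      refine (isNilpotent_iff _).mpr fun i => ?_
      rcases eq_or_ne i 0 with rfl | hi
      · simp
      · simpa [Polynomial.coeff_C, hi] using hnil i hi
    simpa only [sub_add_cancel] using hsub.isUnit_add_right_of_commute (h0.map C) (.all _ _)

end compositeChain

theorem compositeChain_isUnit_iff_and_isNilpotent_iff {B : Type*} [CommRing B]
    (n : ℕ) (hn : 0 < n) (A : ℕ → Subring B) (hA : Monotone A)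
    (f : Polynomial B) (hf : f ∈ compositeChain n A hA) :
    (IsUnit (⟨f, hf⟩ : compositeChain n A hA) ↔
      IsUnit (⟨f.coeff 0, (mem_compositeChain n A hA f).mp hf 0 hn⟩ : A 0) ∧
        ∀ i : ℕ, i ≠ 0 → IsNilpotent (f.coeff i)) ∧
    (IsNilpotent (⟨f, hf⟩ : compositeChain n A hA) ↔
      ∀ i : ℕ, IsNilpotent (f.coeff i)) :=
  ⟨compositeChain.isUnit_iff hn _, compositeChain.isNilpotent_iff _⟩
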